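/- Let a be a positive integer that is not a perfect square and b a positive integer such that a·x² - b·y² = 1 is solvable in positive integers. Let (u₁, v₁) be the minimal positive solution and P = 4a·u₁² - 2. Then all positive integer solutions of a·x² - b·y² = 1 are given by x = u₁·(U_{n+1} - U_n), y = v₁·(U_{n+1} + U_n) for n ≥ 0, where U_n = U_n(P, -1). -/

import Mathlib

/-!
Write `t = 2 a u₁² - 1` and `s = 2 u₁ v₁`, so that `t + s √(ab) = (u₁ √a + v₁ √b)²` is a unit of norm
`t² - ab s² = 1`. Multiplying `x √a + y √b` by this unit or by its conjugate maps solutions of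
`a x² - b y² = 1` to solutions, and the sequence `(u₁ (U_{n+1} - U_n), v₁ (U_{n+1} + U_n))` is the orbit
of `(u₁, v₁)` under the first map. Conversely, the conjugate map sends a positive solution with
`x > u₁` to a positive solution with a smaller `x`: a non-positive second coordinate would either make
`a` a square or produce a solution below `(u₁, v₁)`. Descent on `x` then lands on `(u₁, v₁)`.
-/

/-- Lucas sequence of the first kind with parameters `(P, -1)`. -/
def lucasU (P : ℤ) : ℕ → ℤ
  | 0 => 0
  | 1 => 1
  | n + 2 => P * lucasU P (n + 1) - lucasU P n

lemma lucasU_add_two (P : ℤ) (n : ℕ) :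
    lucasU P (n + 2) = P * lucasU P (n + 1) - lucasU P n :=
  rfl

lemma lucasU_succ_sq_sub_mul_add_sq (P : ℤ) (n : ℕ) :
    lucasU P (n + 1) ^ 2 - P * lucasU P (n + 1) * lucasU P n + lucasU P n ^ 2 = 1 := by
  induction n with
  | zero => simp [lucasU]
  | succ n ih =>
    rw [lucasU_add_two]
    linear_combination ih

lemma le_iff_le_of_pell_eq {a b x y x' y' : ℤ} (ha : 0 < a) (hb : 0 < b)
    (hx : 0 ≤ x) (hy : 0 ≤ y) (hx' : 0 ≤ x') (hy' : 0 ≤ y')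
    (h : a * x ^ 2 - b * y ^ 2 = a * x' ^ 2 - b * y' ^ 2) : x ≤ x' ↔ y ≤ y' := by
  rw [← pow_le_pow_iff_left₀ hx hx' two_ne_zero, ← pow_le_pow_iff_left₀ hy hy' two_ne_zero]
  constructor <;> intro <;> nlinarith

section Descent

variable {a b t s x y : ℤ}

lemma pell_descend (hunit : t ^ 2 - a * b * s ^ 2 = 1) (h : a * x ^ 2 - b * y ^ 2 = 1) :
    a * (t * x - b * s * y) ^ 2 - b * (t * y - a * s * x) ^ 2 = 1 := by
  linear_combination (a * x ^ 2 - b * y ^ 2) * hunit + h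

lemma pell_descend_fst_pos (hb : 0 < b) (hunit : t ^ 2 - a * b * s ^ 2 = 1) (ht : 0 < t)
    (hx : 0 < x) (h : a * x ^ 2 - b * y ^ 2 = 1) :
    0 < t * x - b * s * y := by
  have hsq : (t * x) ^ 2 - (b * s * y) ^ 2 = x ^ 2 + b * s ^ 2 := by
    linear_combination x ^ 2 * hunit + b * s ^ 2 * h
  have hlt : b * s * y < t * x :=
    lt_of_pow_lt_pow_left₀ 2 (by positivity) (by nlinarith)
  linarith

end Descent

section Fundamental

variable {a b u₁ v₁ : ℤ}

def lucasSolX (a u₁ : ℤ) (n : ℕ) : ℤ :=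
  u₁ * (lucasU (4 * a * u₁ ^ 2 - 2) (n + 1) - lucasU (4 * a * u₁ ^ 2 - 2) n)

def lucasSolY (a u₁ v₁ : ℤ) (n : ℕ) : ℤ :=
  v₁ * (lucasU (4 * a * u₁ ^ 2 - 2) (n + 1) + lucasU (4 * a * u₁ ^ 2 - 2) n)

lemma pell_lucasSol (hsol : a * u₁ ^ 2 - b * v₁ ^ 2 = 1) (n : ℕ) :
    a * lucasSolX a u₁ n ^ 2 - b * lucasSolY a u₁ v₁ n ^ 2 = 1 := by
  have hU := lucasU_succ_sq_sub_mul_add_sq (4 * a * u₁ ^ 2 - 2) n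
  unfold lucasSolX lucasSolY
  linear_combination
    (lucasU (4 * a * u₁ ^ 2 - 2) (n + 1) + lucasU (4 * a * u₁ ^ 2 - 2) n) ^ 2 * hsol + hU

lemma lucasSolX_succ (hsol : a * u₁ ^ 2 - b * v₁ ^ 2 = 1) (n : ℕ) :
    lucasSolX a u₁ (n + 1) =
      (2 * a * u₁ ^ 2 - 1) * lucasSolX a u₁ n + b * (2 * u₁ * v₁) * lucasSolY a u₁ v₁ n := by
  unfold lucasSolX lucasSolY
  rw [lucasU_add_two]
  linear_combination
    2 * u₁ * (lucasU (4 * a * u₁ ^ 2 - 2) (n + 1) + lucasU (4 * a * u₁ ^ 2 - 2) n) * hsol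

lemma lucasSolY_succ (n : ℕ) :
    lucasSolY a u₁ v₁ (n + 1) =
      a * (2 * u₁ * v₁) * lucasSolX a u₁ n + (2 * a * u₁ ^ 2 - 1) * lucasSolY a u₁ v₁ n := by
  unfold lucasSolX lucasSolY
  rw [lucasU_add_two]
  ring

variable (ha : 0 < a) (hb : 0 < b) (hu₁ : 0 < u₁) (hv₁ : 0 < v₁)
  (hsol : a * u₁ ^ 2 - b * v₁ ^ 2 = 1)
  (hmin : ∀ u v : ℤ, 0 < u → 0 < v → a * u ^ 2 - b * v ^ 2 = 1 → u₁ ≤ u)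
include ha hb hu₁ hv₁ hsol hmin

lemma pell_descend_snd_pos (hns : ¬ IsSquare a) {x y : ℤ} (hx : 0 < x) (hy : 0 < y)
    (h : a * x ^ 2 - b * y ^ 2 = 1) (hlt : u₁ < x) :
    0 < (2 * a * u₁ ^ 2 - 1) * y - a * (2 * u₁ * v₁) * x := by
  set t := 2 * a * u₁ ^ 2 - 1
  set s := 2 * u₁ * v₁
  set x' := t * x - b * s * y
  set y' := t * y - a * s * x
  have hunit : t ^ 2 - a * b * s ^ 2 = 1 := by linear_combination (4 * a * u₁ ^ 2) * hsol
  have hx' : 0 < x' := pell_descend_fst_pos hb hunit (by nlinarith) hx h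
  have h' : a * x' ^ 2 - b * y' ^ 2 = 1 := pell_descend hunit h
  rcases lt_trichotomy 0 y' with hy' | hy' | hy'
  · exact hy'
  · refine absurd ?_ hns
    have ha1 : a = 1 := Int.eq_one_of_mul_eq_one_right ha.le (by rw [← hy'] at h'; simpa using h')
    exact ha1 ▸ IsSquare.one
  · -- `(x', -y')` is a positive solution, so `x' ≥ u₁` and `-y' ≥ v₁`; with `x > u₁` this
    -- contradicts `a x x' - b y y' = t = a u₁² + b v₁²`.
    have h'' : a * x' ^ 2 - b * (-y') ^ 2 = 1 := by linear_combination h'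
    have hux' : u₁ ≤ x' := hmin x' (-y') hx' (by linarith) h''
    have hvy' : v₁ ≤ -y' :=
      (le_iff_le_of_pell_eq ha hb hu₁.le hv₁.le hx'.le (by linarith) (hsol.trans h''.symm)).1 hux'
    have hvy : v₁ ≤ y :=
      (le_iff_le_of_pell_eq ha hb hu₁.le hv₁.le hx.le hy.le (hsol.trans h.symm)).1 hlt.le
    have hid : a * x * x' + b * y * (-y') = a * u₁ ^ 2 + b * v₁ ^ 2 := by
      linear_combination t * h + hsol
    nlinarith [mul_le_mul hlt.le hux' hu₁.le hx.le, mul_le_mul hvy hvy' hv₁.le hy.le,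
      mul_lt_mul_of_pos_right hlt hu₁]

lemma exists_smaller_pell_solution (hns : ¬ IsSquare a) {x y : ℤ} (hx : 0 < x) (hy : 0 < y)
    (h : a * x ^ 2 - b * y ^ 2 = 1) (hlt : u₁ < x) :
    ∃ x' y', 0 < x' ∧ 0 < y' ∧ x' < x ∧ a * x' ^ 2 - b * y' ^ 2 = 1 ∧
      x = (2 * a * u₁ ^ 2 - 1) * x' + b * (2 * u₁ * v₁) * y' ∧
      y = a * (2 * u₁ * v₁) * x' + (2 * a * u₁ ^ 2 - 1) * y' := by
  have hy' := pell_descend_snd_pos ha hb hu₁ hv₁ hsol hmin hns hx hy h hlt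
  set t := 2 * a * u₁ ^ 2 - 1
  set s := 2 * u₁ * v₁
  have hunit : t ^ 2 - a * b * s ^ 2 = 1 := by linear_combination (4 * a * u₁ ^ 2) * hsol
  have ht : 1 ≤ t := by nlinarith
  have hs : 0 < s := by positivity
  have hx' := pell_descend_fst_pos hb hunit (by omega) hx h
  have hxx : x = t * (t * x - b * s * y) + b * s * (t * y - a * s * x) := by
    linear_combination -x * hunit
  have hyy : y = a * s * (t * x - b * s * y) + t * (t * y - a * s * x) := by
    linear_combination -y * hunit
  refine ⟨_, _, hx', hy', ?_, pell_descend hunit h, hxx, hyy⟩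
  nlinarith [le_mul_of_one_le_left hx'.le ht, mul_pos (mul_pos hb hs) hy']

theorem exists_eq_lucasSol (hns : ¬ IsSquare a) {x y : ℤ} (hx : 0 < x) (hy : 0 < y)
    (h : a * x ^ 2 - b * y ^ 2 = 1) : ∃ n, x = lucasSolX a u₁ n ∧ y = lucasSolY a u₁ v₁ n := by
  rcases (hmin x y hx hy h).eq_or_lt with rfl | hlt
  · have hle := le_iff_le_of_pell_eq ha hb hu₁.le hv₁.le hx.le hy.le (hsol.trans h.symm)
    have hge := le_iff_le_of_pell_eq ha hb hx.le hy.le hu₁.le hv₁.le (h.trans hsol.symm)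
    refine ⟨0, by simp [lucasSolX, lucasU], ?_⟩
    simp [lucasSolY, lucasU, le_antisymm (hge.1 le_rfl) (hle.1 le_rfl)]
  · obtain ⟨x', y', hx', hy', hdec, h', rfl, rfl⟩ :=
      exists_smaller_pell_solution ha hb hu₁ hv₁ hsol hmin hns hx hy h hlt
    obtain ⟨n, rfl, rfl⟩ := exists_eq_lucasSol hns hx' hy' h'
    exact ⟨n + 1, (lucasSolX_succ hsol n).symm, (lucasSolY_succ n).symm⟩
termination_by x.toNat

end Fundamental

theorem stmt_16 (a b : ℤ) (ha : 0 < a) (hb : 0 < b) (hns : ¬ IsSquare a)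
    (u₁ v₁ : ℤ) (hu₁ : 0 < u₁) (hv₁ : 0 < v₁) (hsol : a * u₁ ^ 2 - b * v₁ ^ 2 = 1)
    (hmin : ∀ u v : ℤ, 0 < u → 0 < v → a * u ^ 2 - b * v ^ 2 = 1 → u₁ ≤ u)
    (x y : ℤ) (hx : 0 < x) (hy : 0 < y) :
    a * x ^ 2 - b * y ^ 2 = 1 ↔
      ∃ n : ℕ, x = u₁ * (lucasU (4 * a * u₁ ^ 2 - 2) (n + 1) - lucasU (4 * a * u₁ ^ 2 - 2) n) ∧
        y = v₁ * (lucasU (4 * a * u₁ ^ 2 - 2) (n + 1) + lucasU (4 * a * u₁ ^ 2 - 2) n) := by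
  constructor
  · exact exists_eq_lucasSol ha hb hu₁ hv₁ hsol hmin hns hx hy
  · rintro ⟨n, rfl, rfl⟩
    exact pell_lucasSol hsol n
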